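/- For n ≥ 1, k ≥ 1, and any π ∈ CPERMS(n,k), the listing Rec(π,k) contains every element of CPERMS(n,k) exactly once (it has k^n·n! entries, all distinct), and its first and last permutations differ by a flip of length n: applying flip_n to the last permutation of Rec(π,k) yields its first permutation. Hence Rec(π,k) is a cyclic flip Gray code for CPERMS(n,k). -/

import Mathlib

/-- Increment the colour of every symbol of a coloured pre-permutation by `s`, modulo `k`. -/
def colShift (k s : ℕ) (p : List (ℕ × ℕ)) : List (ℕ × ℕ) :=
  p.map (fun x => (x.1, (x.2 + s) % k))

/-- The colour-incrementing prefix-reversal of length `j` (a "flip"):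
reverse the first `j` symbols and increment their colours by 1 modulo `k`. -/
def cflip (k j : ℕ) (p : List (ℕ × ℕ)) : List (ℕ × ℕ) :=
  colShift k 1 (p.take j).reverse ++ p.drop j

/-- `p` is a `k`-coloured permutation of order `n`: its values are a permutation
of `{1,…,n}` and all its colours lie in `{0,…,k-1}`. -/
def IsCPerm (n k : ℕ) (p : List (ℕ × ℕ)) : Prop :=
  (p.map Prod.fst).Perm ((List.range n).map (· + 1)) ∧ ∀ x ∈ p, x.2 < k

/-- `p` is a pre-perm: distinct values from `{1,…,n}`, colours in `{0,…,k-1}`. -/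
def IsPrePerm (n k : ℕ) (p : List (ℕ × ℕ)) : Prop :=
  (p.map Prod.fst).Nodup ∧ ∀ x ∈ p, (1 ≤ x.1 ∧ x.1 ≤ n) ∧ x.2 < k

/-- The circular string `ρ(p) = p^{+(k-1)} · p^{+(k-2)} ⋯ p^{+0}`. -/
def rho (k : ℕ) (p : List (ℕ × ℕ)) : List (ℕ × ℕ) :=
  ((List.range k).reverse).flatMap (fun s => colShift k s p)

/-- `ρ(p)_i`: the length `j-1` contiguous subword of the circular string `ρ(p)`
ending with `r_{i-1}` (1-based indices modulo `m = k·j`, where `j = p.length`). -/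
def rhoSub (k : ℕ) (p : List (ℕ × ℕ)) (i : ℕ) : List (ℕ × ℕ) :=
  (List.range (p.length - 1)).map
    (fun t => (rho k p).getD ((i + t + k * p.length - p.length) % (k * p.length)) (0, 0))

/-- Fuel-indexed version of the recursive listing `Rec(p,k)`; `fuel = p.length`. -/
def RecAux (k : ℕ) : ℕ → List (ℕ × ℕ) → List (List (ℕ × ℕ))
  | 0, p => (List.range k).map (fun s => colShift k s p)
  | fuel + 1, p =>
    if p.length ≤ 1 then (List.range k).map (fun s => colShift k s p)
    else ((List.range (k * p.length)).reverse).flatMap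
      (fun i => (RecAux k fuel (rhoSub k p (i + 1))).map (fun q => q ++ [(rho k p).getD i (0, 0)]))

/-- The recursive listing `Rec(p,k)`:
`Rec(p₁,k) = p₁, p₁^{+1}, …, p₁^{+(k-1)}` when `p` has length 1, and
`Rec(p,k) = Rec(ρ(p)_m,k)·r_m, Rec(ρ(p)_{m-1},k)·r_{m-1}, …, Rec(ρ(p)_1,k)·r_1` otherwise. -/
def RecList (k : ℕ) (p : List (ℕ × ℕ)) : List (List (ℕ × ℕ)) :=
  RecAux k p.length p

/-- The identity coloured permutation `1⁰2⁰⋯n⁰`. -/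
def idPerm (n : ℕ) : List (ℕ × ℕ) := (List.range n).map (fun i => (i + 1, 0))

/-!
Induction on the length `j` of `p`, along the recursion of `Rec`. The circular string `ρ(p)`
contains each symbol `v^c` (`v` a value of `p`, `c < k`) exactly once, and the values of the
window `ρ(p)_i` followed by `r_i` are a rotation of the values of `p`. So, inductively, the block
`Rec(ρ(p)_i, k) · r_i` lists each coloured rearrangement of `p` ending in `r_i` exactly once, and
the `kj` blocks together list every coloured rearrangement once. The last block of `ρ(p)` is
`p^{+0}`, so the listing starts with `ρ(p)_m · r_m = p^{+0}`; its first block is `p^{+(k-1)}`, so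
it ends with `(ρ(p)_1)^{+(k-1)}` reversed followed by `r_1 = p_1^{+(k-1)}`, that is with
`p^{+(k-1)}` reversed, which the flip of length `j` sends back to `p^{+0}`.
-/

open List

namespace Nat

theorem eq_of_add_mod_eq_add_mod {k c a b : ℕ} (h : (c + a) % k = (c + b) % k)
    (ha : a < k) (hb : b < k) : a = b :=
  Nat.ModEq.eq_of_lt_of_lt (Nat.ModEq.add_left_cancel' c h) ha hb

theorem exists_lt_add_mod_eq {k c' : ℕ} (c : ℕ) (hc' : c' < k) :
    ∃ s < k, (c + s) % k = c' := by
  refine ⟨(c' + (k - c % k)) % k, Nat.mod_lt _ (by omega), ?_⟩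
  have hr := Nat.mod_lt c (show 0 < k by omega)
  have hc := Nat.mod_add_div c k
  rw [Nat.add_mod_mod, show c + (c' + (k - c % k)) = c' + k * (c / k + 1) by
    rw [Nat.mul_succ]; omega, Nat.add_mul_mod_self_left, Nat.mod_eq_of_lt hc']

end Nat

namespace List

theorem length_flatMap_of_forall_length_eq {α β : Type*} {l : List α} {f : α → List β}
    {m : ℕ} (h : ∀ a ∈ l, (f a).length = m) : (l.flatMap f).length = l.length * m := by
  rw [length_flatMap, sum_eq_card_nsmul _ m (by simpa using h), length_map, smul_eq_mul]

theorem getD_flatMap_range_mul_add {α : Type*} {g : ℕ → List α} {j k b t : ℕ} (d : α)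
    (hg : ∀ s < k, (g s).length = j) (hb : b < k) (ht : t < j) :
    ((range k).flatMap g).getD (j * b + t) d = (g b).getD t d := by
  induction k with
  | zero => omega
  | succ k ih =>
    have hlen : ((range k).flatMap g).length = k * j := by
      rw [length_flatMap_of_forall_length_eq fun s hs => hg s (by simp at hs; omega), length_range]
    rw [range_succ, flatMap_append]
    rcases Nat.lt_succ_iff_lt_or_eq.mp hb with hb | rfl
    · rw [getD_append _ _ _ _ (by rw [hlen]; nlinarith)]
      exact ih (fun s hs => hg s (by omega)) hb
    · rw [getD_append_right _ _ _ _ (by rw [hlen, Nat.mul_comm]; omega), hlen, Nat.mul_comm]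
      simp

theorem map_range_getD_add_mod_length {α : Type*} (l : List α) (d : α) (r : ℕ) :
    (range l.length).map (fun t => l.getD ((r + t) % l.length) d) = l.rotate r := by
  rcases eq_or_ne l [] with rfl | hl
  · simp
  have hl := length_pos_iff.mpr hl
  refine ext_getElem (by simp) fun i _ _ => ?_
  rw [getElem_rotate, getElem_map, getElem_range, getD_eq_getElem _ _ (Nat.mod_lt _ hl),
    Nat.add_comm]

theorem nodup_flatMap_map_append_singleton {ι α : Type*} {l : List ι} {L : ι → List (List α)}
    {r : ι → α} (hl : l.Nodup) (hL : ∀ i ∈ l, (L i).Nodup)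
    (hr : ∀ i ∈ l, ∀ i' ∈ l, r i = r i' → i = i') :
    (l.flatMap fun i => (L i).map (· ++ [r i])).Nodup := by
  refine nodup_flatMap.mpr ⟨fun i hi => (hL i hi).map (append_left_injective _), ?_⟩
  refine hl.imp_of_mem fun {i i'} hi hi' hne q hq hq' => hne (hr i hi i' hi' ?_)
  obtain ⟨q₁, -, rfl⟩ := mem_map.mp hq
  obtain ⟨q₂, -, he⟩ := mem_map.mp hq'
  simpa using congrArg getLast? he.symm

end List

section

variable {k : ℕ}

@[simp]
theorem length_colShift (s : ℕ) (p : List (ℕ × ℕ)) : (colShift k s p).length = p.length :=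
  length_map _

@[simp]
theorem map_fst_colShift (s : ℕ) (p : List (ℕ × ℕ)) :
    (colShift k s p).map Prod.fst = p.map Prod.fst := by
  simp [colShift, Function.comp_def]

theorem colShift_colShift (s t : ℕ) (p : List (ℕ × ℕ)) :
    colShift k s (colShift k t p) = colShift k (t + s) p := by
  simp [colShift, Function.comp_def, Nat.add_assoc]

theorem colShift_self (p : List (ℕ × ℕ)) : colShift k k p = colShift k 0 p := by
  simp [colShift]

theorem colShift_dropLast (s : ℕ) (p : List (ℕ × ℕ)) :
    colShift k s p.dropLast = (colShift k s p).dropLast :=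
  map_dropLast

theorem colShift_tail (s : ℕ) (p : List (ℕ × ℕ)) :
    colShift k s p.tail = (colShift k s p).tail :=
  map_tail

theorem cflip_reverse_colShift (hk : 0 < k) (p : List (ℕ × ℕ)) :
    cflip k p.length (colShift k (k - 1) p).reverse = colShift k 0 p := by
  rw [cflip, take_of_length_le (by simp), drop_of_length_le (by simp), reverse_reverse,
    append_nil, colShift_colShift, Nat.sub_add_cancel hk, colShift_self]

theorem rho_eq_flatMap_range (p : List (ℕ × ℕ)) :
    rho k p = (range k).flatMap fun b => colShift k (k - 1 - b) p := by
  rw [rho, range_eq_range', reverse_range', flatMap_map, ← range_eq_range']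
  simp

@[simp]
theorem length_rho (p : List (ℕ × ℕ)) : (rho k p).length = k * p.length := by
  rw [rho_eq_flatMap_range, length_flatMap_of_forall_length_eq (m := p.length) (by simp),
    length_range]

theorem rho_getD_mul_add {p : List (ℕ × ℕ)} {b t : ℕ} (hb : b < k) (ht : t < p.length) :
    (rho k p).getD (p.length * b + t) (0, 0) = (colShift k (k - 1 - b) p).getD t (0, 0) := by
  rw [rho_eq_flatMap_range]
  exact getD_flatMap_range_mul_add _ (by simp) hb ht

theorem fst_rho_getD {p : List (ℕ × ℕ)} {a : ℕ} (ha : a < k * p.length) :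
    ((rho k p).getD a (0, 0)).1 = (p.map Prod.fst).getD (a % p.length) 0 := by
  have hp : 0 < p.length := Nat.pos_of_mul_pos_left (Nat.zero_lt_of_lt ha)
  have hb : a / p.length < k := (Nat.div_lt_iff_lt_mul hp).mpr ha
  have ht := Nat.mod_lt a hp
  conv_lhs => rw [← Nat.div_add_mod a p.length, rho_getD_mul_add hb ht]
  rw [getD_eq_getElem _ _ (by simpa), getD_eq_getElem _ _ (by simpa)]
  simp [colShift]

theorem mem_rho_iff {p : List (ℕ × ℕ)} (hk : 0 < k) {x : ℕ × ℕ} :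
    x ∈ rho k p ↔ x.1 ∈ p.map Prod.fst ∧ x.2 < k := by
  simp only [rho, colShift, mem_flatMap, mem_reverse, mem_range, mem_map]
  constructor
  · rintro ⟨s, -, y, hy, rfl⟩
    exact ⟨⟨y, hy, rfl⟩, Nat.mod_lt _ hk⟩
  · rintro ⟨⟨y, hy, hyx⟩, hx⟩
    obtain ⟨s, hs, hys⟩ := Nat.exists_lt_add_mod_eq y.2 hx
    exact ⟨s, hs, y, hy, by rw [hys, hyx]⟩

theorem nodup_rho {p : List (ℕ × ℕ)} (hp : (p.map Prod.fst).Nodup) : (rho k p).Nodup := by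
  refine nodup_flatMap.mpr ⟨fun s _ => ((map_fst_colShift s p).symm ▸ hp).of_map _, ?_⟩
  refine (nodup_reverse.mpr nodup_range).imp_of_mem fun {s s'} hs hs' hne x hx hx' => hne ?_
  simp only [colShift, mem_map] at hx hx'
  obtain ⟨y, hy, rfl⟩ := hx
  obtain ⟨y', hy', he⟩ := hx'
  obtain ⟨h₁, h₂⟩ := Prod.mk.inj he
  obtain rfl := inj_on_of_nodup_map hp hy' hy h₁
  exact (Nat.eq_of_add_mod_eq_add_mod h₂ (by simpa using hs') (by simpa using hs)).symm

theorem snd_rho_getD_lt (hk : 0 < k) {p : List (ℕ × ℕ)} {i : ℕ} :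
    ((rho k p).getD i (0, 0)).2 < k := by
  rcases Nat.lt_or_ge i (rho k p).length with hi | hi
  · rw [getD_eq_getElem _ _ hi]
    exact ((mem_rho_iff hk).mp (getElem_mem hi)).2
  · rw [getD_eq_default _ _ hi]
    exact hk

theorem exists_rho_getD_eq (hk : 0 < k) {p : List (ℕ × ℕ)} {x : ℕ × ℕ}
    (hx : x.1 ∈ p.map Prod.fst) (hc : x.2 < k) :
    ∃ i < k * p.length, (rho k p).getD i (0, 0) = x := by
  obtain ⟨i, hi, hix⟩ := mem_iff_getElem.mp ((mem_rho_iff hk).mpr ⟨hx, hc⟩)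
  exact ⟨i, by simpa using hi, by rw [getD_eq_getElem _ _ hi, hix]⟩

@[simp]
theorem length_rhoSub (p : List (ℕ × ℕ)) (i : ℕ) : (rhoSub k p i).length = p.length - 1 := by
  simp [rhoSub]

theorem map_fst_rhoSub_append {p : List (ℕ × ℕ)} {i : ℕ} (hi : i < k * p.length) :
    (rhoSub k p (i + 1)).map Prod.fst ++ [((rho k p).getD i (0, 0)).1] =
      (p.map Prod.fst).rotate (i + 1) := by
  have hp : 0 < p.length := Nat.pos_of_mul_pos_left (Nat.zero_lt_of_lt hi)
  have hkp : p.length ≤ k * p.length :=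
    Nat.le_mul_of_pos_left _ (Nat.pos_of_mul_pos_right (Nat.zero_lt_of_lt hi))
  set f := fun t => (p.map Prod.fst).getD ((i + 1 + t) % p.length) 0
  have hwindow : (rhoSub k p (i + 1)).map Prod.fst = (range (p.length - 1)).map f := by
    rw [rhoSub, map_map]
    refine map_congr_left fun t _ => ?_
    rw [Function.comp_apply, fst_rho_getD (Nat.mod_lt _ (by omega)),
      Nat.mod_mod_of_dvd _ (dvd_mul_left _ _),
      show i + 1 + t + k * p.length - p.length = i + 1 + t + (k * p.length - p.length) by omega,
      ← Nat.sub_one_mul, Nat.add_mul_mod_self_right]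
  have hlast : ((rho k p).getD i (0, 0)).1 = f (p.length - 1) := by
    rw [fst_rho_getD hi]
    simp only [f, show i + 1 + (p.length - 1) = i + p.length by omega, Nat.add_mod_right]
  rw [hwindow, hlast, ← map_singleton, ← map_append, ← range_succ, Nat.succ_eq_add_one,
    Nat.sub_add_cancel hp]
  simpa only [length_map] using map_range_getD_add_mod_length (p.map Prod.fst) 0 (i + 1)

theorem rho_getD_last_block {p : List (ℕ × ℕ)} (hk : 0 < k) {t : ℕ} (ht : t < p.length) :
    (rho k p).getD (p.length * (k - 1) + t) (0, 0) = (colShift k 0 p).getD t (0, 0) := by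
  rw [rho_getD_mul_add (by omega) ht, Nat.sub_self]

theorem rho_getD_zero (hk : 0 < k) {p : List (ℕ × ℕ)} (hp : p ≠ []) :
    (rho k p).getD 0 (0, 0) = (colShift k (k - 1) p).getD 0 (0, 0) :=
  rho_getD_mul_add (b := 0) (t := 0) hk (length_pos_iff.mpr hp)

theorem rho_getD_mul_length_sub_one (hk : 0 < k) {p : List (ℕ × ℕ)} (hp : p ≠ []) :
    (rho k p).getD (k * p.length - 1) (0, 0) =
      (colShift k 0 p).getLast (by simpa [colShift] using hp) := by
  have hj := length_pos_iff.mpr hp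
  obtain ⟨k, rfl⟩ := Nat.exists_eq_add_one_of_ne_zero hk.ne'
  rw [show (k + 1) * p.length - 1 = p.length * (k + 1 - 1) + (p.length - 1) by
    rw [Nat.add_sub_cancel, Nat.add_mul, Nat.mul_comm]; omega,
    rho_getD_last_block hk (by omega), getLast_eq_getElem, getD_eq_getElem _ _ (by simp; omega)]
  simp

theorem rhoSub_mul_length (hk : 0 < k) (p : List (ℕ × ℕ)) :
    rhoSub k p (k * p.length) = (colShift k 0 p).dropLast := by
  obtain ⟨k, rfl⟩ := Nat.exists_eq_add_one_of_ne_zero hk.ne'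
  refine ext_getElem (by simp) fun t h₁ _ => ?_
  simp only [length_rhoSub] at h₁
  have hkp : (k + 1) * p.length = p.length * k + p.length := by ring
  have e : ((k + 1) * p.length + t + (k + 1) * p.length - p.length) % ((k + 1) * p.length) =
      p.length * (k + 1 - 1) + t := by
    rw [show (k + 1) * p.length + t + (k + 1) * p.length - p.length =
      (k + 1) * p.length + (p.length * k + t) by ring_nf; omega,
      Nat.add_mod_left, Nat.mod_eq_of_lt (by omega), Nat.add_sub_cancel]
  simp only [rhoSub, getElem_map, getElem_range]
  rw [e, rho_getD_last_block hk (by omega),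
    getElem_dropLast, getD_eq_getElem]

theorem rhoSub_one (hk : 0 < k) {p : List (ℕ × ℕ)} (hp : 2 ≤ p.length) :
    rhoSub k p 1 = (colShift k 0 p).tail := by
  obtain ⟨k, rfl⟩ := Nat.exists_eq_add_one_of_ne_zero hk.ne'
  refine ext_getElem (by simp) fun t h₁ _ => ?_
  simp only [length_rhoSub] at h₁
  have hkp : (k + 1) * p.length = p.length * k + p.length := by ring
  have e : (1 + t + (k + 1) * p.length - p.length) % ((k + 1) * p.length) =
      p.length * (k + 1 - 1) + (t + 1) := by
    rw [show 1 + t + (k + 1) * p.length - p.length = p.length * k + (t + 1) by ring_nf; omega,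
      Nat.mod_eq_of_lt (by omega), Nat.add_sub_cancel]
  simp only [rhoSub, getElem_map, getElem_range]
  rw [e, rho_getD_last_block hk (by omega),
    getElem_tail, getD_eq_getElem]

theorem nodup_map_fst_rhoSub {p : List (ℕ × ℕ)} (hp : (p.map Prod.fst).Nodup) {i : ℕ}
    (hi : i < k * p.length) : ((rhoSub k p (i + 1)).map Prod.fst).Nodup := by
  have h := (nodup_rotate (n := i + 1)).mpr hp
  rw [← map_fst_rhoSub_append hi] at h
  exact (nodup_append.mp h).1

theorem recList_singleton (x : ℕ × ℕ) :
    RecList k [x] = (range k).map fun s => colShift k s [x] := by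
  simp [RecList, RecAux]

/-- `(rho k p).getD i (0, 0)` is the paper's `r_{i+1}`. -/
theorem recList_of_two_le {p : List (ℕ × ℕ)} (hp : 2 ≤ p.length) :
    RecList k p = (range (k * p.length)).reverse.flatMap fun i =>
      (RecList k (rhoSub k p (i + 1))).map (· ++ [(rho k p).getD i (0, 0)]) := by
  obtain ⟨j, hj⟩ : ∃ j, p.length = j + 1 := ⟨p.length - 1, by omega⟩
  simp only [RecList, length_rhoSub, hj, Nat.add_sub_cancel]
  rw [RecAux, if_neg (by omega), hj]

variable (k) in
@[elab_as_elim]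
theorem rhoSub_induction {motive : List (ℕ × ℕ) → Prop} (singleton : ∀ x, motive [x])
    (step : ∀ p, 2 ≤ p.length → (∀ i, motive (rhoSub k p (i + 1))) → motive p)
    {p : List (ℕ × ℕ)} (hp : p ≠ []) : motive p := by
  induction h : p.length using Nat.strong_induction_on generalizing p with
  | _ j ih =>
    have h1 := length_pos_iff.mpr hp
    rcases Nat.lt_or_ge p.length 2 with h2 | h2
    · obtain ⟨x, rfl⟩ := length_eq_one_iff.mp (show p.length = 1 by omega)
      exact singleton x
    · refine step p h2 fun i => ih _ (by simp; omega) ?_ rfl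
      rw [ne_eq, ← length_eq_zero_iff, length_rhoSub]
      omega

theorem length_recList {p : List (ℕ × ℕ)} (hp : p ≠ []) :
    (RecList k p).length = k ^ p.length * p.length.factorial := by
  refine rhoSub_induction k (fun x => by simp [recList_singleton]) (fun p hp ih => ?_) hp
  obtain ⟨j, hj⟩ : ∃ j, p.length = j + 1 := ⟨p.length - 1, by omega⟩
  rw [recList_of_two_le hp, length_flatMap_of_forall_length_eq (m := k ^ j * j.factorial)
    (fun i _ => by rw [length_map, ih, length_rhoSub, hj, Nat.add_sub_cancel]),
    length_reverse, length_range, hj, pow_succ, Nat.factorial_succ]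
  ring

theorem nodup_recList {p : List (ℕ × ℕ)} (hp : p ≠ []) (hnd : (p.map Prod.fst).Nodup) :
    (RecList k p).Nodup := by
  revert hnd
  refine rhoSub_induction k (fun x _ => ?_) (fun p hp ih hnd => ?_) hp
  · rw [recList_singleton]
    refine nodup_range.map_on fun s hs s' hs' h => Nat.eq_of_add_mod_eq_add_mod (c := x.2) ?_
      (mem_range.mp hs) (mem_range.mp hs')
    simpa [colShift] using h
  · rw [recList_of_two_le hp]
    refine nodup_flatMap_map_append_singleton (nodup_reverse.mpr nodup_range)
      (fun i hi => ih i (nodup_map_fst_rhoSub hnd (by simpa using hi))) fun i hi i' hi' h => ?_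
    rw [mem_reverse, mem_range] at hi hi'
    rw [getD_eq_getElem _ _ (by simpa), getD_eq_getElem _ _ (by simpa)] at h
    exact (nodup_rho hnd).getElem_inj_iff.mp h

theorem mem_recList_singleton_iff (hk : 0 < k) {x : ℕ × ℕ} {q : List (ℕ × ℕ)} :
    q ∈ RecList k [x] ↔ (q.map Prod.fst).Perm [x.1] ∧ ∀ y ∈ q, y.2 < k := by
  simp only [recList_singleton, mem_map, mem_range, perm_singleton, map_eq_singleton_iff]
  constructor
  · rintro ⟨s, -, rfl⟩
    exact ⟨⟨_, rfl, rfl⟩, by simpa [colShift] using Nat.mod_lt _ hk⟩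
  · rintro ⟨⟨y, rfl, hy⟩, hcol⟩
    obtain ⟨s, hs, hys⟩ := Nat.exists_lt_add_mod_eq x.2 (hcol y (mem_singleton_self y))
    exact ⟨s, hs, by simp [colShift, hys, ← hy]⟩

theorem mem_recList_iff (hk : 0 < k) {p q : List (ℕ × ℕ)} (hp : p ≠ []) :
    q ∈ RecList k p ↔ (q.map Prod.fst).Perm (p.map Prod.fst) ∧ ∀ x ∈ q, x.2 < k := by
  refine rhoSub_induction k (motive := fun p => ∀ q : List (ℕ × ℕ), q ∈ RecList k p ↔
    (q.map Prod.fst).Perm (p.map Prod.fst) ∧ ∀ x ∈ q, x.2 < k)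
    (fun x q => mem_recList_singleton_iff hk) (fun p hp ih q => ?_) hp q
  simp only [recList_of_two_le hp, mem_flatMap, mem_reverse, mem_range, mem_map]
  constructor
  · rintro ⟨i, hi, q, hq, rfl⟩
    obtain ⟨hperm, hcol⟩ := (ih i q).mp hq
    refine ⟨?_, ?_⟩
    · rw [map_append, map_singleton]
      exact (hperm.append_right _).trans ((map_fst_rhoSub_append hi).symm ▸ rotate_perm _ _)
    · simp only [mem_append, mem_singleton]
      rintro x (hx | rfl)
      exacts [hcol x hx, snd_rho_getD_lt hk]
  · rintro ⟨hperm, hcol⟩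
    have hq : q ≠ [] := by
      rintro rfl
      have := hperm.length_eq
      simp only [map_nil, length_nil, length_map] at this
      omega
    obtain ⟨i, hi, hix⟩ := exists_rho_getD_eq hk
      (hperm.subset (mem_map_of_mem (getLast_mem hq))) (hcol _ (getLast_mem hq))
    refine ⟨i, hi, q.dropLast,
      (ih i _).mpr ⟨?_, fun y hy => hcol y (dropLast_subset _ hy)⟩, ?_⟩
    · have hq' : q.dropLast.map Prod.fst ++ [(q.getLast hq).1] = q.map Prod.fst := by
        rw [← map_singleton, ← map_append, dropLast_append_getLast]
      rw [← perm_append_right_iff [(q.getLast hq).1], hq', ← hix, map_fst_rhoSub_append hi]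
      exact hperm.trans (rotate_perm _ _).symm
    · rw [hix, dropLast_append_getLast]

theorem head?_recList (hk : 0 < k) {p : List (ℕ × ℕ)} (hp : p ≠ []) :
    (RecList k p).head? = some (colShift k 0 p) := by
  refine rhoSub_induction k (fun x => ?_) (fun p hp ih => ?_) hp
  · obtain ⟨k, rfl⟩ := Nat.exists_eq_add_one_of_ne_zero hk.ne'
    simp [recList_singleton, range_succ_eq_map]
  have hne : p ≠ [] := ne_nil_of_length_pos (by omega)
  obtain ⟨M, hM⟩ : ∃ M, k * p.length = M + 1 :=
    ⟨k * p.length - 1, by have := Nat.mul_le_mul hk hp; omega⟩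
  rw [recList_of_two_le hp, hM, range_succ, reverse_append, reverse_singleton, singleton_append,
    flatMap_cons, head?_append, head?_map, ih, ← hM, rhoSub_mul_length hk,
    show M = k * p.length - 1 by omega, rho_getD_mul_length_sub_one hk hne, colShift_dropLast,
    colShift_colShift, Option.map_some, Option.some_or, dropLast_append_getLast]

theorem getLast?_recList (hk : 0 < k) {p : List (ℕ × ℕ)} (hp : p ≠ []) :
    (RecList k p).getLast? = some (colShift k (k - 1) p).reverse := by
  refine rhoSub_induction k (fun x => ?_) (fun p hp ih => ?_) hp
  · obtain ⟨k, rfl⟩ := Nat.exists_eq_add_one_of_ne_zero hk.ne'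
    simp [recList_singleton, range_succ, colShift]
  obtain ⟨a, l, rfl⟩ := exists_cons_of_ne_nil (ne_nil_of_length_pos (by omega : 0 < p.length))
  obtain ⟨M, hM⟩ : ∃ M, k * (a :: l).length = M + 1 :=
    ⟨k * (a :: l).length - 1, by have := Nat.mul_le_mul hk hp; omega⟩
  rw [recList_of_two_le hp, hM, range_succ_eq_map, reverse_cons, flatMap_append, getLast?_append,
    flatMap_singleton, getLast?_map, ih, zero_add, rhoSub_one hk hp,
    rho_getD_zero hk (cons_ne_nil _ _), colShift_tail, colShift_colShift, zero_add]
  simp [colShift]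

end

/-- For `n,k ≥ 1` and `π ∈ CPERMS(n,k)`, the listing `Rec(π,k)`
contains every element of `CPERMS(n,k)` exactly once (it has `kⁿ·n!` entries, all
distinct), and applying a flip of length `n` to its last permutation yields its first:
it is a cyclic flip Gray code for `CPERMS(n,k)`. -/
theorem recList_cyclic_gray_code (n k : ℕ) (hn : 1 ≤ n) (hk : 1 ≤ k)
    (π : List (ℕ × ℕ)) (hπ : IsCPerm n k π) :
    (RecList k π).length = k ^ n * n.factorial ∧
    (RecList k π).Nodup ∧
    (∀ q, IsCPerm n k q → q ∈ RecList k π) ∧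
    (∀ q ∈ RecList k π, IsCPerm n k q) ∧
    ∃ first last, (RecList k π).head? = some first ∧
      (RecList k π).getLast? = some last ∧ cflip k n last = first := by
  obtain ⟨hperm, -⟩ := hπ
  have hlen : π.length = n := by simpa using hperm.length_eq
  have hne : π ≠ [] := ne_nil_of_length_pos (by omega)
  have hnd : (π.map Prod.fst).Nodup :=
    hperm.nodup_iff.mpr (nodup_range.map fun _ _ => Nat.succ.inj)
  refine ⟨hlen ▸ length_recList hne, nodup_recList hne hnd,
    fun q hq => (mem_recList_iff hk hne).mpr ⟨hq.1.trans hperm.symm, hq.2⟩,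
    fun q hq => ?_, _, _, head?_recList hk hne, getLast?_recList hk hne,
    hlen ▸ cflip_reverse_colShift hk π⟩
  obtain ⟨hq, hcol⟩ := (mem_recList_iff hk hne).mp hq
  exact ⟨hq.trans hperm, hcol⟩
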